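/- Every point of the closed ellipse E_b = {(x,y) : x² + (y/b)² ≤ 1} with 0 < b ≤ 1 is contained in the closed disk of radius 1/b centered at (0, b − 1/b); moreover the point (0, b) lies on the boundary of that disk. More generally, for every boundary point ζ of E_b there is a closed disk of radius 1/b containing E_b with ζ on its boundary circle. -/

import Mathlib

/-! If `p` is a boundary point of `E_b` and `g` is half the gradient of the defining quadratic form
`Q` at `p`, then expanding `Q` at `p` gives `‖z - p‖² ≤ 2 ⟪p - z, g⟫` for every `z ∈ E_b` (using
`b ≤ 1`), while `‖g‖ ≤ 1 / b`. Together these say exactly that `E_b` lies in the closed disk of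
radius `1 / b` tangent to `∂E_b` at `p` from inside. For `p = i b` its centre is `i (b - 1 / b)`. -/

open Metric

open scoped RealInnerProductSpace

theorem mem_closedBall_sub_smul_iff {E : Type*} [NormedAddCommGroup E] [InnerProductSpace ℝ E]
    {p u z : E} {R : ℝ} (hu : ‖u‖ = 1) (hR : 0 ≤ R) :
    z ∈ closedBall (p - R • u) R ↔ ‖z - p‖ ^ 2 ≤ 2 * R * ⟪p - z, u⟫ := by
  have hexpand : ‖z - (p - R • u)‖ ^ 2 = ‖z - p‖ ^ 2 - 2 * R * ⟪p - z, u⟫ + R ^ 2 := by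
    rw [show z - (p - R • u) = (z - p) + R • u by abel, norm_add_sq_real, inner_smul_right,
      norm_smul, hu, Real.norm_eq_abs, abs_of_nonneg hR, ← neg_sub p z, inner_neg_left]
    ring
  rw [mem_closedBall, dist_eq_norm, ← sq_le_sq₀ (norm_nonneg _) hR, hexpand]
  constructor <;> intro h <;> linarith

lemma Complex.inner_eq_re_mul_re_add_im_mul_im (w z : ℂ) :
    ⟪w, z⟫ = w.re * z.re + w.im * z.im := by
  simp only [Complex.inner, Complex.mul_re, Complex.conj_re, Complex.conj_im]
  ring

lemma Complex.sq_norm_eq_re_sq_add_im_sq (z : ℂ) : ‖z‖ ^ 2 = z.re ^ 2 + z.im ^ 2 := by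
  rw [Complex.sq_norm, Complex.normSq_apply]
  ring

/-- Half the gradient at `p` of `z ↦ z.re ^ 2 + (z.im / b) ^ 2`: an outward normal of `E_b`. -/
noncomputable def ellipseNormal (b : ℝ) (p : ℂ) : ℂ := ⟨p.re, p.im / b ^ 2⟩

lemma ellipseNormal_ne_zero {b : ℝ} {p : ℂ} (hp : p.re ^ 2 + (p.im / b) ^ 2 = 1) :
    ellipseNormal b p ≠ 0 := by
  intro h
  have hre : p.re = 0 := congrArg Complex.re h
  have him : p.im / b ^ 2 = 0 := congrArg Complex.im h
  have : p.im / b = 0 := by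
    rcases div_eq_zero_iff.mp him with h0 | h0
    · simp [h0]
    · simp [pow_eq_zero_iff two_ne_zero |>.mp h0]
  simp [hre, this] at hp

/-- Centre of the disk of radius `1 / b` tangent to `∂E_b` from inside at `p`. -/
noncomputable def ellipseSupportCenter (b : ℝ) (p : ℂ) : ℂ :=
  p - (1 / b) • (‖ellipseNormal b p‖⁻¹ • ellipseNormal b p)

lemma norm_inv_norm_smul_of_ne_zero {E : Type*} [NormedAddCommGroup E] [NormedSpace ℝ E] {v : E}
    (hv : v ≠ 0) :
    ‖‖v‖⁻¹ • v‖ = 1 := by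
  rw [norm_smul, norm_inv, norm_norm, inv_mul_cancel₀ (norm_ne_zero_iff.mpr hv)]

section

variable {b : ℝ} (hb : 0 < b) (hb1 : b ≤ 1)
include hb hb1

lemma norm_sub_sq_le_two_inner_ellipseNormal {p z : ℂ}
    (hz : z.re ^ 2 + (z.im / b) ^ 2 ≤ p.re ^ 2 + (p.im / b) ^ 2) :
    ‖z - p‖ ^ 2 ≤ 2 * ⟪p - z, ellipseNormal b p⟫ := by
  rw [Complex.sq_norm_eq_re_sq_add_im_sq, Complex.inner_eq_re_mul_re_add_im_mul_im]
  simp only [ellipseNormal, Complex.sub_re, Complex.sub_im]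
  -- exact second-order Taylor expansion of the quadratic form at `p`
  have htaylor : 2 * ((p.re - z.re) * p.re + (p.im - z.im) * (p.im / b ^ 2)) =
      (p.re ^ 2 + (p.im / b) ^ 2) - (z.re ^ 2 + (z.im / b) ^ 2)
        + (z.re - p.re) ^ 2 + (z.im - p.im) ^ 2 / b ^ 2 := by
    field_simp; ring
  have hb2 : (z.im - p.im) ^ 2 ≤ (z.im - p.im) ^ 2 / b ^ 2 :=
    le_div_self (sq_nonneg _) (by positivity) (pow_le_one₀ hb.le hb1)
  linarith

lemma norm_ellipseNormal_le {p : ℂ} (hp : p.re ^ 2 + (p.im / b) ^ 2 ≤ 1) :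
    ‖ellipseNormal b p‖ ≤ 1 / b := by
  refine (sq_le_sq₀ (norm_nonneg _) (by positivity)).mp ?_
  rw [Complex.sq_norm_eq_re_sq_add_im_sq]
  simp only [ellipseNormal]
  have hb2 : b ^ 2 ≤ 1 := pow_le_one₀ hb.le hb1
  calc p.re ^ 2 + (p.im / b ^ 2) ^ 2 ≤ (p.re ^ 2 + (p.im / b) ^ 2) / b ^ 2 := by
        rw [le_div_iff₀ (by positivity)]
        field_simp
        nlinarith [mul_le_mul_of_nonneg_left hb2 (mul_nonneg (sq_nonneg p.re) (sq_nonneg b))]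
    _ ≤ (1 / b) ^ 2 := by
        rw [one_div_pow]; gcongr

lemma ellipse_subset_closedBall_ellipseSupportCenter {p : ℂ}
    (hp : p.re ^ 2 + (p.im / b) ^ 2 = 1) :
    {z : ℂ | z.re ^ 2 + (z.im / b) ^ 2 ≤ 1} ⊆ closedBall (ellipseSupportCenter b p) (1 / b) := by
  intro z hz
  have hg : ellipseNormal b p ≠ 0 := ellipseNormal_ne_zero hp
  rw [ellipseSupportCenter,
    mem_closedBall_sub_smul_iff (norm_inv_norm_smul_of_ne_zero hg) (by positivity), inner_smul_right]
  have hchord := norm_sub_sq_le_two_inner_ellipseNormal hb hb1 (hz.trans hp.ge)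
  have hscale : 1 ≤ 1 / b * ‖ellipseNormal b p‖⁻¹ := by
    rw [← div_eq_mul_inv, one_le_div (norm_pos_iff.mpr hg)]
    exact norm_ellipseNormal_le hb hb1 hp.le
  have hinner : 0 ≤ ⟪p - z, ellipseNormal b p⟫ := by nlinarith [sq_nonneg ‖z - p‖]
  nlinarith [mul_le_mul_of_nonneg_right hscale hinner]

end

lemma dist_ellipseSupportCenter {b : ℝ} (hb : 0 < b) {p : ℂ}
    (hp : p.re ^ 2 + (p.im / b) ^ 2 = 1) :
    dist p (ellipseSupportCenter b p) = 1 / b := by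
  rw [ellipseSupportCenter, dist_self_sub_right, norm_smul,
    norm_inv_norm_smul_of_ne_zero (ellipseNormal_ne_zero hp), mul_one,
    Real.norm_of_nonneg (by positivity)]

lemma ellipseSupportCenter_I_mul {b : ℝ} (hb : 0 < b) :
    ellipseSupportCenter b (Complex.I * b) = Complex.I * ((b : ℂ) - 1 / b) := by
  have hg : ellipseNormal b (Complex.I * b) = (b⁻¹ : ℝ) * Complex.I := by
    apply Complex.ext <;> simp [ellipseNormal]
    field_simp
  rw [ellipseSupportCenter, hg]
  apply Complex.ext <;> simp [abs_of_pos hb, hb.ne']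

lemma ellipse_eq_one_of_mem_frontier {b : ℝ} {ζ : ℂ}
    (hζ : ζ ∈ frontier {z : ℂ | z.re ^ 2 + (z.im / b) ^ 2 ≤ 1}) :
    ζ.re ^ 2 + (ζ.im / b) ^ 2 = 1 :=
  frontier_le_subset_eq (f := fun z : ℂ => z.re ^ 2 + (z.im / b) ^ 2) (by fun_prop)
    continuous_const hζ

/-- The ellipse `E_b` is `(1/b)`-circular: it is contained in the closed disk
of radius `1/b` centered at `(0, b - 1/b)`, whose boundary passes through
`(0, b)`; and more generally every boundary point of `E_b` lies on the
boundary circle of some closed disk of radius `1/b` containing `E_b`. -/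
theorem ellipse_circular (b : ℝ) (hb : 0 < b) (hb1 : b ≤ 1) :
    ({z : ℂ | z.re ^ 2 + (z.im / b) ^ 2 ≤ 1} ⊆
        closedBall (Complex.I * ((b : ℂ) - 1 / b)) (1 / b)) ∧
    dist (Complex.I * (b : ℂ)) (Complex.I * ((b : ℂ) - 1 / b)) = 1 / b ∧
    ∀ ζ ∈ frontier {z : ℂ | z.re ^ 2 + (z.im / b) ^ 2 ≤ 1},
      ∃ c : ℂ, dist ζ c = 1 / b ∧
        {z : ℂ | z.re ^ 2 + (z.im / b) ^ 2 ≤ 1} ⊆ closedBall c (1 / b) := by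
  have htop : (Complex.I * b).re ^ 2 + ((Complex.I * b).im / b) ^ 2 = 1 := by
    simp [hb.ne']
  rw [← ellipseSupportCenter_I_mul hb]
  refine ⟨ellipse_subset_closedBall_ellipseSupportCenter hb hb1 htop,
    dist_ellipseSupportCenter hb htop, fun ζ hζ => ?_⟩
  have hζ1 := ellipse_eq_one_of_mem_frontier hζ
  exact ⟨ellipseSupportCenter b ζ, dist_ellipseSupportCenter hb hζ1,
    ellipse_subset_closedBall_ellipseSupportCenter hb hb1 hζ1⟩
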